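/- arXiv:2003.00649 — 3 statements merged into one kernel-verified Lean document; each statement's English description precedes it below -/
import Mathlib

section
/- For every real number r > 0 there exists a constant c > 0 such that for all δ with 0 ≤ δ ≤ 1, one has 2r − 2·arsinh(2·sinh(r/2)·√(1 + (sinh(r/2)/cosh δ)²)) ≥ c·δ². -/
/-!
Let `s = sinh (r/2)` and `A = 2 s √(1 + (s / cosh δ)²)`, so that `sinh r = 2 s √(1 + s²) ≥ A`.
Since `sinh` has slope at most `cosh r` on `[0, r]`, the defect `r - arsinh A` is at least
`(sinh r - A) / cosh r`. The difference `sinh r - A = 2 s (√(1 + s²) - √(1 + (s / cosh δ)²))` is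
controlled by the difference of the radicands, `s² tanh² δ`, and `tanh δ ≥ δ / cosh 1` on `[0, 1]`.
-/

open Real

namespace Real

lemma sinh_sub_sinh_le_mul_cosh {x y : ℝ} (hy : 0 ≤ y) (hyx : y ≤ x) :
    sinh x - sinh y ≤ cosh x * (x - y) := by
  refine (convex_Icc 0 x).image_sub_le_mul_sub_of_deriv_le continuous_sinh.continuousOn
    differentiable_sinh.differentiableOn (fun z hz => ?_) y ⟨hy, hyx⟩ x ⟨hy.trans hyx, le_rfl⟩ hyx
  rw [interior_Icc] at hz
  rw [deriv_sinh, cosh_le_cosh, abs_of_pos hz.1, abs_of_nonneg (hz.1.le.trans hz.2.le)]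
  exact hz.2.le

lemma sinh_sub_div_cosh_le_sub_arsinh {x a : ℝ} (ha : 0 ≤ a) (hax : a ≤ sinh x) :
    (sinh x - a) / cosh x ≤ x - arsinh a := by
  have h := sinh_sub_sinh_le_mul_cosh (x := x) (arsinh_nonneg_iff.2 ha)
    (by rwa [← arsinh_le_arsinh, arsinh_sinh] at hax)
  rw [sinh_arsinh] at h
  rwa [div_le_iff₀' (cosh_pos x)]

lemma div_cosh_le_tanh {δ x : ℝ} (hδ : 0 ≤ δ) (hδx : δ ≤ x) : δ / cosh x ≤ tanh δ := by
  rw [tanh_eq_sinh_div_cosh]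
  have hcosh : cosh δ ≤ cosh x := by
    rw [cosh_le_cosh, abs_of_nonneg hδ, abs_of_nonneg (hδ.trans hδx)]
    exact hδx
  calc δ / cosh x ≤ δ / cosh δ := div_le_div_of_nonneg_left hδ (cosh_pos δ) hcosh
    _ ≤ sinh δ / cosh δ := div_le_div_of_nonneg_right (self_le_sinh_iff.2 hδ) (cosh_pos δ).le

lemma sqrt_one_add_sinh_sq (x : ℝ) : √(1 + sinh x ^ 2) = cosh x := by
  rw [← cosh_arsinh, arsinh_sinh]

lemma sub_div_two_sqrt_le_sqrt_sub_sqrt {a b : ℝ} (ha : 0 ≤ a) (hab : a ≤ b) :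
    (b - a) / (2 * √b) ≤ √b - √a := by
  have hsqrt : √a ≤ √b := sqrt_le_sqrt hab
  refine div_le_of_le_mul₀ (by positivity) (by linarith) ?_
  calc b - a = (√b - √a) * (√b + √a) := by
        linear_combination sq_sqrt ha - sq_sqrt (ha.trans hab)
    _ ≤ (√b - √a) * (2 * √b) := by gcongr; linarith

lemma sinh_half_pow_three_mul_tanh_sq_div_le {r : ℝ} (hr : 0 ≤ r) (δ : ℝ) :
    sinh (r / 2) ^ 3 * tanh δ ^ 2 / cosh (r / 2) ≤
      sinh r - 2 * sinh (r / 2) * √(1 + (sinh (r / 2) / cosh δ) ^ 2) := by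
  set s := sinh (r / 2)
  have hs : 0 ≤ s := sinh_nonneg_iff.2 (by linarith)
  have hradicand : 1 + s ^ 2 - (1 + (s / cosh δ) ^ 2) = s ^ 2 * tanh δ ^ 2 := by
    rw [tanh_eq_sinh_div_cosh, div_pow (sinh δ), sinh_sq δ]
    field_simp [(cosh_pos δ).ne']
    ring
  have hsinh : sinh r = 2 * s * √(1 + s ^ 2) := by
    rw [sqrt_one_add_sinh_sq, ← sinh_two_mul, mul_div_cancel₀ r two_ne_zero]
  have hsqrt := sub_div_two_sqrt_le_sqrt_sub_sqrt (a := 1 + (s / cosh δ) ^ 2)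
    (by positivity) (b := 1 + s ^ 2) (by linarith [hradicand, sq_nonneg (s * tanh δ)])
  rw [hradicand, sqrt_one_add_sinh_sq] at hsqrt
  rw [hsinh, ← mul_sub, sqrt_one_add_sinh_sq]
  calc s ^ 3 * tanh δ ^ 2 / cosh (r / 2) = 2 * s * (s ^ 2 * tanh δ ^ 2 / (2 * cosh (r / 2))) := by
        field_simp
    _ ≤ _ := by gcongr

end Real

/-- For every `r > 0` there is a constant `c > 0` such that for all `0 ≤ δ ≤ 1`,
`2r - 2 arsinh (2 sinh (r/2) √(1 + (sinh (r/2)/cosh δ)²)) ≥ c δ²`. -/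
theorem stmt4 (r : ℝ) (hr : 0 < r) :
    ∃ c : ℝ, 0 < c ∧ ∀ δ : ℝ, 0 ≤ δ → δ ≤ 1 →
      c * δ ^ 2 ≤ 2 * r - 2 * Real.arsinh
        (2 * Real.sinh (r / 2) * Real.sqrt (1 + (Real.sinh (r / 2) / Real.cosh δ) ^ 2)) := by
  set s := sinh (r / 2)
  have hs : 0 < s := sinh_pos_iff.2 (by linarith)
  refine ⟨2 * s ^ 3 / (cosh (r / 2) * cosh r * cosh 1 ^ 2), by positivity, fun δ hδ0 hδ1 => ?_⟩
  set A := 2 * s * √(1 + (s / cosh δ) ^ 2)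
  have hdeficit : s ^ 3 * tanh δ ^ 2 / cosh (r / 2) ≤ sinh r - A :=
    sinh_half_pow_three_mul_tanh_sq_div_le hr.le δ
  have hA : A ≤ sinh r := by
    have : 0 ≤ s ^ 3 * tanh δ ^ 2 / cosh (r / 2) := by positivity
    linarith
  have harsinh := sinh_sub_div_cosh_le_sub_arsinh (x := r) (a := A) (by positivity) hA
  have htanh : δ / cosh 1 ≤ tanh δ := div_cosh_le_tanh hδ0 hδ1
  calc 2 * s ^ 3 / (cosh (r / 2) * cosh r * cosh 1 ^ 2) * δ ^ 2
      = 2 * (s ^ 3 * (δ / cosh 1) ^ 2 / cosh (r / 2) / cosh r) := by field_simp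
    _ ≤ 2 * (s ^ 3 * tanh δ ^ 2 / cosh (r / 2) / cosh r) := by gcongr
    _ ≤ 2 * ((sinh r - A) / cosh r) := by gcongr
    _ ≤ 2 * r - 2 * arsinh A := by linarith
end

section
/- For every real number δ with 0 ≤ δ ≤ 1, one has 1 − 2·arsinh(2·sinh(1/4)·√(1 + (sinh(1/4)/cosh δ)²)) ≥ δ²/100. -/
/-!
With `s = sinh (1/4)` one has `sinh (1/2) ^ 2 = 4 s² (1 + s²)`, so the square of the argument of
`arsinh` is `sinh (1/2) ^ 2 - 4 s⁴ tanh² δ`. Lowering `1/2` to `1/2 - δ²/200` decreases `sinh²` by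
at most `(δ²/200) sinh 1` (convexity of `cosh`), whereas `tanh δ ≥ δ / cosh 1` and `s ≥ 1/4` make
the saving `4 s⁴ tanh² δ` at least `δ² / (64 cosh² 1)`; the two compare because
`sinh 1 · cosh² 1 < 25/8`.
-/

open Real

namespace Real

theorem cosh_sub_mul_sinh_le_cosh_sub (y ε : ℝ) : cosh y - ε * sinh y ≤ cosh (y - ε) := by
  have h₁ : exp y * (1 - ε) ≤ exp y * exp (-ε) :=
    mul_le_mul_of_nonneg_left (by linarith [add_one_le_exp (-ε)]) (exp_pos y).le
  have h₂ : exp (-y) * (1 + ε) ≤ exp (-y) * exp ε :=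
    mul_le_mul_of_nonneg_left (by linarith [add_one_le_exp ε]) (exp_pos _).le
  rw [cosh_eq, cosh_eq, sinh_eq, sub_eq_add_neg y, exp_add, neg_add, neg_neg, exp_add]
  linarith

theorem sinh_sq_eq_cosh_two_mul (x : ℝ) : sinh x ^ 2 = (cosh (2 * x) - 1) / 2 := by
  rw [cosh_two_mul, cosh_sq]; ring

theorem sinh_sq_sub_sinh_sub_sq_le (y ε : ℝ) :
    sinh y ^ 2 - sinh (y - ε) ^ 2 ≤ ε * sinh (2 * y) := by
  have := cosh_sub_mul_sinh_le_cosh_sub (2 * y) (2 * ε)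
  rw [sinh_sq_eq_cosh_two_mul, sinh_sq_eq_cosh_two_mul, mul_sub]
  linarith

theorem sinh_two_mul_sq (x : ℝ) : sinh (2 * x) ^ 2 = 4 * sinh x ^ 2 * (1 + sinh x ^ 2) := by
  rw [sinh_two_mul, mul_pow, mul_pow, cosh_sq']; ring

theorem inv_cosh_sq (x : ℝ) : (cosh x ^ 2)⁻¹ = 1 - tanh x ^ 2 := by
  rw [tanh_eq_sinh_div_cosh, div_pow, sinh_sq]
  field_simp
  ring

theorem div_cosh_le_tanh_s5 {x a : ℝ} (hx : 0 ≤ x) (hxa : x ≤ a) : x / cosh a ≤ tanh x := by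
  rw [tanh_eq_sinh_div_cosh]
  refine div_le_div₀ (sinh_nonneg_iff.2 hx) (self_le_sinh_iff.2 hx) (cosh_pos x) ?_
  rwa [cosh_le_cosh, abs_of_nonneg hx, abs_of_nonneg (hx.trans hxa)]

theorem sinh_one_mul_cosh_one_sq_lt : sinh 1 * cosh 1 ^ 2 < 25 / 8 := by
  have ha : exp 1 < 2.72 := exp_one_lt_d9.trans (by norm_num)
  have hb : exp (-1) < 0.38 := by
    rw [exp_neg, inv_lt_comm₀ (exp_pos 1) (by norm_num)]
    exact lt_trans (by norm_num) exp_one_gt_d9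
  have hb₀ := exp_pos (-1)
  have h_sq : exp 1 ^ 2 < 2.72 ^ 2 := pow_lt_pow_left₀ ha (exp_pos 1).le two_ne_zero
  have h_sum : exp 1 + exp (-1) < 3.1 := by linarith
  have h_prod : exp 1 ^ 2 * (exp 1 + exp (-1)) < 2.72 ^ 2 * 3.1 :=
    mul_lt_mul'' h_sq h_sum (sq_nonneg _) (by positivity)
  -- `sinh 1 · cosh² 1 = (e² - e⁻²)(e + e⁻¹)/8 ≤ e² (e + e⁻¹)/8`
  rw [sinh_eq, cosh_eq]
  nlinarith [mul_pos (pow_pos hb₀ 2) (add_pos (exp_pos 1) hb₀)]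

end Real

/-- For every real `δ` with `0 ≤ δ ≤ 1`,
`1 - 2 arsinh (2 sinh (1/4) √(1 + (sinh (1/4)/cosh δ)²)) ≥ δ²/100`. -/
theorem stmt5 (δ : ℝ) (h0 : 0 ≤ δ) (h1 : δ ≤ 1) :
    δ ^ 2 / 100 ≤ 1 - 2 * Real.arsinh
      (2 * Real.sinh (1 / 4) * Real.sqrt (1 + (Real.sinh (1 / 4) / Real.cosh δ) ^ 2)) := by
  set s := sinh (1 / 4)
  set u := 1 / 2 - δ ^ 2 / 200 with hu
  set X := 2 * s * √(1 + (s / cosh δ) ^ 2)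
  have hX_sq : X ^ 2 = sinh (1 / 2) ^ 2 - 4 * s ^ 4 * tanh δ ^ 2 := by
    rw [mul_pow, sq_sqrt (by positivity), div_pow, div_eq_mul_inv, inv_cosh_sq,
      show (1 / 2 : ℝ) = 2 * (1 / 4) by norm_num, sinh_two_mul_sq]
    ring
  have h_defect : sinh (1 / 2) ^ 2 - sinh u ^ 2 ≤ δ ^ 2 / 200 * sinh 1 := by
    simpa only [show 2 * (1 / 2 : ℝ) = 1 by norm_num] using
      sinh_sq_sub_sinh_sub_sq_le (1 / 2) (δ ^ 2 / 200)
  have h_gain : δ ^ 2 / 200 * sinh 1 ≤ 4 * s ^ 4 * tanh δ ^ 2 := by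
    have hs : 1 / 4 ≤ s := self_le_sinh_iff.2 (by norm_num)
    have ht : δ / cosh 1 ≤ tanh δ := div_cosh_le_tanh_s5 h0 h1
    calc δ ^ 2 / 200 * sinh 1 ≤ 4 * (1 / 4) ^ 4 * (δ / cosh 1) ^ 2 := by
          field_simp
          nlinarith [sinh_one_mul_cosh_one_sq_lt, sq_nonneg δ]
      _ ≤ 4 * s ^ 4 * tanh δ ^ 2 := by gcongr
  have hX : X ≤ sinh u := by
    have hu₀ : 0 ≤ sinh u := sinh_nonneg_iff.2 (by nlinarith [hu])
    exact (pow_le_pow_iff_left₀ (by positivity) hu₀ two_ne_zero).1 (by linarith)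
  have h_arsinh := (arsinh_le_arsinh.2 hX).trans_eq (arsinh_sinh u)
  linarith [hu]
end

section
/- There is a constant c ≥ 1/200 such that the following holds; in fact c = 1/200 works. For every angle θ with 0 < θ ≤ π/2, let u := 2·arsinh(sin θ · sinh(1/4)) and consider the three points x = exp(−u)·(cos θ + i·sin θ), p = cos θ + i·sin θ, and y = exp(u)·(cos θ + i·sin θ) of the hyperbolic upper half-plane. Then dist(p,x) = dist(p,y) = 1/2, and dist(x,y) ≤ 1 − (π/2 − θ)²/200. -/
/-!
All three points lie on the hypercycle `t ↦ exp t • e^{iθ}`, along which the points with parameters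
`a ≤ b` are at distance `2 arsinh (sinh ((b - a) / 2) / sin θ)`. With `sinh u = sin θ sinh (1/4)`
this is `1/2` for consecutive points and `2 arsinh (2 sinh (1/4) cosh u)` for the outer ones.
For `δ = π/2 - θ` the square of that argument is `sinh² (1/2) - 4 sinh⁴ (1/4) sin² δ`, so the
tangent-line bound `sinh (1/2 - τ) ≥ sinh (1/2) - (3/2) cosh (1/2) τ` at `τ = δ² / 400`, together
with `sin δ ≥ 2δ/π`, gives the deficit `δ² / 200`.
-/

open Real
open scoped UpperHalfPlane

lemma UpperHalfPlane.dist_of_coe_eq_exp_mul {θ a b : ℝ} (hθ : 0 < sin θ) (hab : a ≤ b)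
    {z w : ℍ} (hz : (z : ℂ) = (exp a : ℝ) * (cos θ + sin θ * Complex.I))
    (hw : (w : ℂ) = (exp b : ℝ) * (cos θ + sin θ * Complex.I)) :
    dist z w = 2 * arsinh (sinh ((b - a) / 2) / sin θ) := by
  have him {c : ℝ} {u : ℍ} (hu : (u : ℂ) = (exp c : ℝ) * (cos θ + sin θ * Complex.I)) :
      u.im = exp c * sin θ := by
    rw [← UpperHalfPlane.coe_im, hu]
    simp only [Complex.mul_im, Complex.add_im, Complex.add_re, Complex.mul_re, Complex.ofReal_re,
      Complex.ofReal_im, Complex.I_re, Complex.I_im]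
    ring
  have hnorm : ‖(cos θ : ℂ) + sin θ * Complex.I‖ = 1 := by
    rw [Complex.norm_add_mul_I, cos_sq_add_sin_sq, sqrt_one]
  have hdist : dist (z : ℂ) w = exp b - exp a := by
    rw [Complex.dist_eq, hz, hw, ← sub_mul, norm_mul, hnorm, mul_one, ← Complex.ofReal_sub,
      Complex.norm_real, norm_eq_abs, abs_sub_comm, abs_of_nonneg (by simpa using hab)]
  have hmid : exp a * exp b = exp ((a + b) / 2) ^ 2 := by
    rw [← exp_add, ← exp_nat_mul]; ring_nf
  have hsqrt : √(z.im * w.im) = sin θ * exp ((a + b) / 2) := by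
    rw [him hz, him hw, show exp a * sin θ * (exp b * sin θ) = (sin θ * exp ((a + b) / 2)) ^ 2 by
      rw [mul_pow, ← hmid]; ring, sqrt_sq (by positivity)]
  have hb : exp b = exp ((b - a) / 2) * exp ((a + b) / 2) := by rw [← exp_add]; ring_nf
  have ha : exp a = exp (-((b - a) / 2)) * exp ((a + b) / 2) := by rw [← exp_add]; ring_nf
  rw [UpperHalfPlane.dist_eq, hdist, hsqrt, sinh_eq, hb, ha]
  field_simp

lemma Real.sinh_le_three_halves_mul {t : ℝ} (h0 : 0 ≤ t) (h1 : t ≤ 1) : sinh t ≤ 3 / 2 * t := by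
  have hexp := (abs_le.mp (abs_exp_sub_one_le (x := t) (by rwa [abs_of_nonneg h0]))).2
  have hexp_neg := add_one_le_exp (-t)
  rw [abs_of_nonneg h0] at hexp
  rw [sinh_eq]
  linarith

lemma Real.sinh_sub_three_halves_mul_cosh_mul_le {a t : ℝ} (ha : 0 ≤ a) (h0 : 0 ≤ t)
    (h1 : t ≤ 1) : sinh a - 3 / 2 * cosh a * t ≤ sinh (a - t) := by
  rw [sinh_sub]
  nlinarith [one_le_cosh t, sinh_nonneg_iff.mpr ha, cosh_pos a, sinh_le_three_halves_mul h0 h1]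

lemma Real.sinh_two_mul_arsinh_mul_div {s : ℝ} (hs : s ≠ 0) (S : ℝ) :
    sinh (2 * arsinh (s * S)) / s = 2 * S * √(1 + (s * S) ^ 2) := by
  rw [sinh_two_mul, sinh_arsinh, cosh_arsinh]
  field_simp

lemma Real.sinh_one_lt_d2 : sinh 1 < 1.36 := by
  have := exp_one_lt_d9
  have := exp_pos (-1)
  rw [sinh_eq]
  linarith

lemma Real.sq_two_mul_sinh_mul_sqrt (r δ : ℝ) :
    (2 * sinh r * √(1 + (cos δ * sinh r) ^ 2)) ^ 2 =
      sinh (2 * r) ^ 2 - 4 * sinh r ^ 4 * sin δ ^ 2 := by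
  rw [mul_pow, sq_sqrt (by positivity), sinh_two_mul]
  linear_combination (-4 * sinh r ^ 2) * cosh_sq' r + 4 * sinh r ^ 4 * sin_sq_add_cos_sq δ

lemma Real.two_fifths_mul_sq_le_sin_sq {δ : ℝ} (h0 : 0 ≤ δ) (h1 : δ ≤ π / 2) :
    2 / 5 * δ ^ 2 ≤ sin δ ^ 2 :=
  calc 2 / 5 * δ ^ 2 ≤ (2 / π) ^ 2 * δ ^ 2 := by
        gcongr
        rw [div_pow, le_div_iff₀ (by positivity)]
        nlinarith [pi_pos, pi_lt_d2]
    _ = (2 / π * δ) ^ 2 := by ring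
    _ ≤ sin δ ^ 2 := pow_le_pow_left₀ (by positivity) (mul_le_sin h0 h1) 2

lemma two_mul_arsinh_chord_le {δ : ℝ} (h0 : 0 ≤ δ) (h1 : δ ≤ π / 2) :
    2 * arsinh (2 * sinh (1 / 4) * √(1 + (cos δ * sinh (1 / 4)) ^ 2)) ≤ 1 - δ ^ 2 / 200 := by
  set v := 2 * sinh (1 / 4) * √(1 + (cos δ * sinh (1 / 4)) ^ 2)
  set τ := δ ^ 2 / 400 with hτ_def
  have hv_sq : v ^ 2 = sinh (1 / 2) ^ 2 - 4 * sinh (1 / 4) ^ 4 * sin δ ^ 2 := by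
    rw [sq_two_mul_sinh_mul_sqrt]; norm_num
  have hτ : τ ≤ 1 / 160 := by nlinarith [pi_lt_d2]
  have hS4 : 1 / 256 ≤ sinh (1 / 4) ^ 4 := by
    have hS : (1 / 4 : ℝ) ≤ sinh (1 / 4) := (self_lt_sinh_iff.mpr (by norm_num)).le
    have := pow_le_pow_left₀ (by norm_num) hS 4
    norm_num at this ⊢; linarith
  have hsinh_one : sinh 1 = 2 * sinh (1 / 2) * cosh (1 / 2) := by
    rw [← sinh_two_mul]; norm_num
  have hsinh_half : 1 / 2 < sinh (1 / 2) := self_lt_sinh_iff.mpr (by norm_num)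
  have hcosh_half : cosh (1 / 2) < 1.36 := by nlinarith [sinh_one_lt_d2, cosh_pos (1 / 2)]
  have hR := sinh_sub_three_halves_mul_cosh_mul_le (a := 1 / 2) (by norm_num) (by positivity)
    (hτ.trans (by norm_num))
  have hR0 : 0 ≤ sinh (1 / 2) - 3 / 2 * cosh (1 / 2) * τ := by nlinarith [cosh_pos (1 / 2)]
  have hdeficit : 3 / 2 * sinh 1 * τ ≤ 4 * sinh (1 / 4) ^ 4 * sin δ ^ 2 := by
    nlinarith [mul_le_mul hS4 (two_fifths_mul_sq_le_sin_sq h0 h1) (by positivity) (by positivity),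
      mul_le_mul_of_nonneg_right sinh_one_lt_d2.le (by positivity : 0 ≤ τ)]
  have hvR : v ≤ sinh (1 / 2) - 3 / 2 * cosh (1 / 2) * τ := by
    refine (pow_le_pow_iff_left₀ (by positivity) hR0 two_ne_zero).mp ?_
    nlinarith [sq_nonneg (3 / 2 * cosh (1 / 2) * τ)]
  calc 2 * arsinh v ≤ 2 * arsinh (sinh (1 / 2 - τ)) := by
        gcongr; exact hvR.trans hR
    _ = 1 - δ ^ 2 / 200 := by rw [arsinh_sinh]; ring

/-- There is a constant `c ≥ 1/200` (in fact `c = 1/200` works) such that for every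
`0 < θ ≤ π/2`, setting `u := 2 arsinh (sin θ · sinh (1/4))` and taking the three points
`x = exp (-u) (cos θ + i sin θ)`, `p = cos θ + i sin θ`, `y = exp u (cos θ + i sin θ)`
of the hyperbolic upper half-plane, one has `dist p x = dist p y = 1/2` and
`dist x y ≤ 1 - c (π/2 - θ)²`. -/
theorem stmt7 :
    ∃ c : ℝ, 1 / 200 ≤ c ∧
      ∀ θ : ℝ, 0 < θ → θ ≤ Real.pi / 2 →
        ∀ x p y : UpperHalfPlane,
          (x : ℂ) = (Real.exp (-(2 * Real.arsinh (Real.sin θ * Real.sinh (1 / 4)))) : ℝ) *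
              (Real.cos θ + Real.sin θ * Complex.I) →
          (p : ℂ) = Real.cos θ + Real.sin θ * Complex.I →
          (y : ℂ) = (Real.exp (2 * Real.arsinh (Real.sin θ * Real.sinh (1 / 4))) : ℝ) *
              (Real.cos θ + Real.sin θ * Complex.I) →
          dist p x = 1 / 2 ∧ dist p y = 1 / 2 ∧
          dist x y ≤ 1 - c * (Real.pi / 2 - θ) ^ 2 := by
  refine ⟨1 / 200, le_rfl, fun θ h0 h1 x p y hx hp hy => ?_⟩
  have hs : 0 < sin θ := sin_pos_of_pos_of_lt_pi h0 (by linarith [pi_pos])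
  set u := arsinh (sin θ * sinh (1 / 4)) with hu_def
  have hu : 0 ≤ u := arsinh_nonneg_iff.mpr (by positivity)
  have hp' : (p : ℂ) = (exp 0 : ℝ) * (cos θ + sin θ * Complex.I) := by simp [hp]
  have hhalf : 2 * arsinh (sinh u / sin θ) = 1 / 2 := by
    rw [sinh_arsinh, mul_div_cancel_left₀ _ hs.ne', arsinh_sinh]; norm_num
  refine ⟨?_, ?_, ?_⟩
  · rw [dist_comm, UpperHalfPlane.dist_of_coe_eq_exp_mul hs (by linarith) hx hp',
      show (0 - -(2 * u)) / 2 = u by ring, hhalf]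
  · rw [UpperHalfPlane.dist_of_coe_eq_exp_mul hs (by linarith) hp' hy,
      show (2 * u - 0) / 2 = u by ring, hhalf]
  · rw [UpperHalfPlane.dist_of_coe_eq_exp_mul hs (by linarith) hx hy,
      show (2 * u - -(2 * u)) / 2 = 2 * u by ring, hu_def, sinh_two_mul_arsinh_mul_div hs.ne',
      ← cos_pi_div_two_sub]
    linarith [two_mul_arsinh_chord_le (δ := π / 2 - θ) (by linarith) (by linarith)]
end
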